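/- arXiv:2308.12528 — 6 statements merged into one kernel-verified Lean document; each statement's English description precedes it below -/
import Mathlib

section
/- Let G be a connected bipartite finite simple undirected graph on vertex set {1,…,N} (N ≥ 2) with adjacency matrix A and diagonal degree matrix D, and suppose the real matrix I + A·D⁻¹ is diagonalizable. Then 0 is a root of the characteristic polynomial of I + A·D⁻¹ of multiplicity exactly one. -/
open Matrix

open Polynomial Finset

lemma charpoly_conj_aux {n : Type*} [Fintype n] [DecidableEq n]
    (P B : Matrix n n ℝ) (hP : IsUnit P) :
    (P * B * P⁻¹).charpoly = B.charpoly := by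
  have hPd : IsUnit P.det := (Matrix.isUnit_iff_isUnit_det P).mp hP
  have h1 : P * P⁻¹ = 1 := Matrix.mul_nonsing_inv P hPd
  have hmap : (P.map (C : ℝ → ℝ[X])) * ((P⁻¹).map C) = 1 := by
    rw [← Matrix.map_mul, h1, Matrix.map_one _ (map_zero _) (map_one _)]
  have hchar : Matrix.charmatrix (P * B * P⁻¹)
      = P.map C * Matrix.charmatrix B * (P⁻¹).map C := by
    unfold Matrix.charmatrix
    rw [Matrix.mul_sub, Matrix.sub_mul]
    congr 1
    · have hc : Commute (Matrix.scalar n (X : ℝ[X])) (P.map C) :=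
        Matrix.scalar_commute _ (fun r => Commute.all _ _) _
      rw [← hc.eq, mul_assoc, hmap, mul_one]
    · simp only [← RingHom.mapMatrix_apply, _root_.map_mul]
  rw [Matrix.charpoly, Matrix.charpoly, hchar, Matrix.det_mul, Matrix.det_mul]
  have hmap' : ((P⁻¹).map (C : ℝ → ℝ[X])) * (P.map C) = 1 := by
    rw [← Matrix.map_mul, Matrix.nonsing_inv_mul P hPd, Matrix.map_one _ (map_zero _) (map_one _)]
  rw [mul_comm, ← mul_assoc, ← Matrix.det_mul, hmap', Matrix.det_one, one_mul]

lemma charpoly_diagonal_aux {n : Type*} [Fintype n] [DecidableEq n] (d : n → ℝ) :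
    (Matrix.diagonal d).charpoly = ∏ i, (X - C (d i)) := by
  rw [Matrix.charpoly]
  have : Matrix.charmatrix (Matrix.diagonal d)
      = Matrix.diagonal (fun i => (X : ℝ[X]) - C (d i)) := by
    ext i j
    rcases eq_or_ne i j with rfl | h
    · simp
    · simp [Matrix.charmatrix_apply_ne _ _ _ h, Matrix.diagonal_apply_ne _ h]
  rw [this, Matrix.det_diagonal]


lemma ker_rank_aux (N : ℕ) (hN : 2 ≤ N) (G : SimpleGraph (Fin N)) [DecidableRel G.Adj]
    (hconn : G.Connected) (V : Set (Fin N))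
    (hbip : ∀ i j, G.Adj i j → (i ∈ V ↔ j ∉ V)) :
    Module.finrank ℝ (LinearMap.ker
      (1 + G.adjMatrix ℝ * (Matrix.diagonal fun v => (G.degree v : ℝ))⁻¹).mulVecLin) = 1 := by
  classical
  have hnt : Nontrivial (Fin N) := Fin.nontrivial_iff_two_le.mpr hN
  have hdeg : ∀ v : Fin N, 0 < G.degree v := by
    intro v
    rw [SimpleGraph.degree_pos_iff_exists_adj]
    obtain ⟨u, hu⟩ := exists_ne v
    obtain ⟨p⟩ := hconn.preconnected v u
    cases p with
    | nil => exact absurd rfl hu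
    | cons h q => exact ⟨_, h⟩
  have hdegR : ∀ v : Fin N, (G.degree v : ℝ) ≠ 0 := fun v =>
    Nat.cast_ne_zero.mpr (hdeg v).ne'
  set s : Fin N → ℝ := fun i => if i ∈ V then 1 else -1 with hs
  have hs_sq : ∀ i, s i * s i = 1 := by
    intro i; by_cases hi : i ∈ V <;> simp [hs, hi]
  have hs_abs : ∀ i, |s i| = 1 := by
    intro i; by_cases hi : i ∈ V <;> simp [hs, hi]
  have hs_adj : ∀ i j, G.Adj i j → s j = -s i := by
    intro i j h
    by_cases hi : i ∈ V
    · have : j ∉ V := (hbip i j h).mp hi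
      simp [hs, hi, this]
    · have : j ∈ V := by
        by_contra hj
        exact hi ((hbip i j h).mpr hj)
      simp [hs, hi, this]
  set w : Fin N → ℝ := fun i => (G.degree i : ℝ) * s i with hw
  have hwne : w ≠ 0 := by
    intro h
    have h0 := congrFun h ⟨0, by omega⟩
    have := hdegR ⟨0, by omega⟩
    have := hs_abs ⟨0, by omega⟩
    simp only [hw, Pi.zero_apply, mul_eq_zero] at h0
    rcases h0 with h0 | h0
    · exact hdegR _ h0
    · rw [h0, abs_zero] at this; norm_num at this
  set M := 1 + G.adjMatrix ℝ * (Matrix.diagonal fun v => (G.degree v : ℝ))⁻¹ with hM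
  have hinv : (Matrix.diagonal fun v => (G.degree v : ℝ))⁻¹
      = Matrix.diagonal (fun v => ((G.degree v : ℝ))⁻¹) := by
    apply Matrix.inv_eq_right_inv
    rw [Matrix.diagonal_mul_diagonal]
    rw [show (fun v => (G.degree v : ℝ) * ((G.degree v : ℝ))⁻¹) = fun _ => (1:ℝ) from
      funext fun v => mul_inv_cancel₀ (hdegR v), Matrix.diagonal_one]
  have hmul : ∀ (x : Fin N → ℝ) (i : Fin N), (M *ᵥ x) i
      = x i + ∑ j ∈ G.neighborFinset i, ((G.degree j : ℝ))⁻¹ * x j := by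
    intro x i
    rw [hM, Matrix.add_mulVec, Matrix.one_mulVec, hinv, ← Matrix.mulVec_mulVec]
    rw [Pi.add_apply, SimpleGraph.adjMatrix_mulVec_apply]
    congr 1
    apply Finset.sum_congr rfl
    intro j _
    rw [Matrix.mulVec_diagonal]
  have hker : LinearMap.ker M.mulVecLin = Submodule.span ℝ {w} := by
    apply le_antisymm
    · intro x hx
      rw [LinearMap.mem_ker, Matrix.mulVecLin_apply] at hx
      set y : Fin N → ℝ := fun j => ((G.degree j : ℝ))⁻¹ * x j with hy
      have hxy : ∀ j, x j = (G.degree j : ℝ) * y j := by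
        intro j
        show x j = (G.degree j : ℝ) * (((G.degree j : ℝ))⁻¹ * x j)
        rw [← mul_assoc, mul_inv_cancel₀ (hdegR j), one_mul]
      have eq1 : ∀ i, (G.degree i : ℝ) * y i + ∑ j ∈ G.neighborFinset i, y j = 0 := by
        intro i
        have := congrFun hx i
        rw [hmul x i, Pi.zero_apply, hxy i] at this
        convert this using 2
      obtain ⟨i₀, -, hmax⟩ := Finset.exists_max_image Finset.univ (fun j => |y j|)
        Finset.univ_nonempty
      replace hmax : ∀ j, |y j| ≤ |y i₀| := fun j => hmax j (Finset.mem_univ j)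
      set m := |y i₀| with hm
      by_cases hm0 : m = 0
      · have : x = 0 := by
          funext j
          have h1 : |y j| ≤ 0 := hm0 ▸ hmax j
          have h2 : y j = 0 := abs_eq_zero.mp (le_antisymm h1 (abs_nonneg _))
          rw [hxy j, h2, mul_zero, Pi.zero_apply]
        rw [this]; exact Submodule.zero_mem _
      · have hmpos : 0 < m := lt_of_le_of_ne (abs_nonneg _) (Ne.symm hm0)
        have prop : ∀ i j, |y i| = m → G.Adj i j → y j = -y i := by
          intro i j hi hij
          have hsum : ∑ k ∈ G.neighborFinset i, y k = -((G.degree i : ℝ) * y i) := by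
            linarith [eq1 i]
          have hterm : ∀ k ∈ G.neighborFinset i, (0:ℝ) ≤ y i * y k + m^2 := by
            intro k _
            have h1 : |y i * y k| ≤ m * m := by
              rw [abs_mul, hi]
              exact mul_le_mul_of_nonneg_left (hmax k) hmpos.le
            nlinarith [neg_abs_le (y i * y k)]
          have hisq : y i ^ 2 = m ^ 2 := by rw [← sq_abs, hi]
          have hzero : ∑ k ∈ G.neighborFinset i, (y i * y k + m^2) = 0 := by
            rw [Finset.sum_add_distrib, ← Finset.mul_sum, hsum, Finset.sum_const,
              G.card_neighborFinset_eq_degree, nsmul_eq_mul]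
            nlinarith [hisq]
          have hj := (Finset.sum_eq_zero_iff_of_nonneg hterm).mp hzero j
            ((SimpleGraph.mem_neighborFinset G i j).mpr hij)
          have hyi : y i ≠ 0 := by
            intro h; rw [h, abs_zero] at hi; exact hm0 hi.symm
          apply mul_left_cancel₀ hyi
          nlinarith [hj, hisq]
        set c := s i₀ * y i₀ with hc
        have hcabs : |c| = m := by rw [hc, abs_mul, hs_abs, one_mul]
        have hwalk : ∀ (u k : Fin N), G.Walk u k → y u = s u * c → y k = s k * c := by
          intro u k p
          induction p with
          | nil => exact id
          | cons hadj q ih =>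
            rename_i a b k'
            intro hu
            apply ih
            have habs : |y a| = m := by rw [hu, abs_mul, hs_abs, one_mul, hcabs]
            have h1 := prop a b habs hadj
            rw [h1, hu, hs_adj a b hadj]; ring
        have hy0 : y i₀ = s i₀ * c := by
          rw [hc, ← mul_assoc, hs_sq, one_mul]
        have hyk : ∀ k, y k = s k * c := fun k =>
          hwalk i₀ k (hconn.preconnected i₀ k).some hy0
        rw [Submodule.mem_span_singleton]
        refine ⟨c, ?_⟩
        funext i
        rw [Pi.smul_apply, hw, hxy i, hyk i, smul_eq_mul]
        ring
    · rw [Submodule.span_le, Set.singleton_subset_iff]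
      rw [SetLike.mem_coe, LinearMap.mem_ker, Matrix.mulVecLin_apply]
      funext i
      rw [hmul w i, Pi.zero_apply]
      have : ∀ j ∈ G.neighborFinset i, ((G.degree j : ℝ))⁻¹ * w j = -s i := by
        intro j hj
        rw [hw]
        have : s j = -s i := hs_adj i j ((SimpleGraph.mem_neighborFinset G i j).mp hj)
        rw [← mul_assoc, inv_mul_cancel₀ (hdegR j), one_mul, this]
      rw [Finset.sum_congr rfl this, Finset.sum_const, G.card_neighborFinset_eq_degree,
        nsmul_eq_mul, hw]
      ring
  rw [hker]
  exact finrank_span_singleton hwne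


/-- For a connected bipartite graph, if `I + A·D⁻¹` is diagonalizable (over ℝ), then `0` is a
root of its characteristic polynomial of multiplicity exactly one. -/
theorem stmt_5 (N : ℕ) (hN : 2 ≤ N) (G : SimpleGraph (Fin N)) [DecidableRel G.Adj]
    (hconn : G.Connected) (V : Set (Fin N))
    (hbip : ∀ i j, G.Adj i j → (i ∈ V ↔ j ∉ V))
    (hdiag : ∃ (P : Matrix (Fin N) (Fin N) ℝ) (d : Fin N → ℝ), IsUnit P ∧
      1 + G.adjMatrix ℝ * (Matrix.diagonal fun v => (G.degree v : ℝ))⁻¹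
        = P * Matrix.diagonal d * P⁻¹) :
    Polynomial.rootMultiplicity 0
      (1 + G.adjMatrix ℝ * (Matrix.diagonal fun v => (G.degree v : ℝ))⁻¹).charpoly = 1 := by
  classical
  obtain ⟨P, d, hP, hMeq⟩ := hdiag
  have hker := ker_rank_aux N hN G hconn V hbip
  set M := 1 + G.adjMatrix ℝ * (Matrix.diagonal fun v => (G.degree v : ℝ))⁻¹ with hM
  have hPd : IsUnit P.det := (Matrix.isUnit_iff_isUnit_det P).mp hP
  have hPid : IsUnit (P⁻¹).det := by
    exact P.isUnit_nonsing_inv_det hPd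
  have hrk : M.rank = Fintype.card {i // d i ≠ 0} := by
    rw [hMeq, Matrix.rank_mul_eq_left_of_isUnit_det _ _ hPid,
      Matrix.rank_mul_eq_right_of_isUnit_det _ _ hPd, Matrix.rank_diagonal]
  have hrn : M.rank + Module.finrank ℝ (LinearMap.ker M.mulVecLin)
      = Fintype.card (Fin N) := by
    rw [Matrix.rank]
    rw [LinearMap.finrank_range_add_finrank_ker M.mulVecLin]
    simp [Module.finrank_pi]
  rw [hker, hrk, Fintype.card_fin] at hrn
  have hcp : M.charpoly = ∏ i, (X - C (d i)) := by
    rw [hMeq, charpoly_conj_aux P _ hP, charpoly_diagonal_aux]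
  rw [hcp]
  have hprod : (∏ i, ((X : ℝ[X]) - C (d i)))
      = (Multiset.map (fun a => (X : ℝ[X]) - C a) (Multiset.map d Finset.univ.val)).prod := by
    rw [Multiset.map_map]
    rfl
  rw [← Polynomial.count_roots, hprod, Polynomial.roots_multiset_prod_X_sub_C,
    Multiset.count_map]
  have h1 : Multiset.filter (fun a => 0 = d a) Finset.univ.val
      = (Finset.filter (fun a => 0 = d a) Finset.univ).val := rfl
  rw [h1]
  have h2 : (Finset.filter (fun a => 0 = d a) Finset.univ).card
      + (Finset.filter (fun a => ¬ 0 = d a) Finset.univ).card = N := by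
    rw [Finset.card_filter_add_card_filter_not, Finset.card_univ, Fintype.card_fin]
  have h3 : (Finset.filter (fun a => ¬ 0 = d a) Finset.univ).card
      = Fintype.card {i // d i ≠ 0} := by
    rw [Fintype.card_subtype]
    congr 1
    apply Finset.filter_congr
    intro i _
    simp [eq_comm]
  rw [h3] at h2
  have h4 : Multiset.card (Finset.filter (fun a => 0 = d a) (Finset.univ : Finset (Fin N))).val
      = (Finset.filter (fun a => 0 = d a) (Finset.univ : Finset (Fin N))).card := rfl
  rw [h4]
  omega
end

section
/- Let B be an N×N column stochastic real matrix and let p ∈ (0,1). Then the matrix I + p·B + (1−p)·B² is invertible, and the unique row vector z ∈ ℝ^N satisfying z·(I + p·B + (1−p)·B²) = 𝟏 is z = (1/2)·𝟏. -/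
/-!
Since `𝟏 B = 𝟏`, also `𝟏 B² = 𝟏`, so `𝟏 (I + pB + (1-p)B²) = 2·𝟏` and `½𝟏` is a solution;
it is the only one once the matrix is invertible. For invertibility, the complexified `Bᵀ` has
row sums of absolute values equal to `1`, hence `ℓ^∞` operator norm at most `1`, so its spectrum
lies in the closed unit disc. By the spectral mapping theorem, a singular `I + pBᵀ + (1-p)(Bᵀ)²`
would give a root of `1 + pz + (1-p)z²` in that disc, where this polynomial has positive real
part.
-/

open Matrix Polynomial
open scoped Matrix.Norms.Operator

noncomputable def mixPoly (p : ℝ) : ℝ[X] := C (1 - p) * X ^ 2 + C p * X + 1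

theorem aeval_mixPoly {A : Type*} [Ring A] [Algebra ℝ A] (p : ℝ) (a : A) :
    aeval a (mixPoly p) = 1 + p • a + (1 - p) • a ^ 2 := by
  simp only [mixPoly, map_add, map_mul, aeval_C, aeval_X, map_pow, map_one, Algebra.smul_def]
  abel

theorem degree_mixPoly {p : ℝ} (hp1 : p < 1) : (mixPoly p).degree = 2 := by
  rw [mixPoly, ← C_1]
  exact degree_quadratic (sub_ne_zero.2 hp1.ne')

/-- `1 + p z + (1 - p) z² = p (1 + z) + (1 - p) (1 + z²)`, and on the closed unit disc both
`1 + z` and `1 + z²` have nonnegative real part, vanishing only at `z = -1` and `z = ± i`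
respectively. -/
theorem re_aeval_mixPoly_pos {p : ℝ} (hp0 : 0 < p) (hp1 : p < 1) {z : ℂ} (hz : ‖z‖ ≤ 1) :
    0 < (aeval z (mixPoly p)).re := by
  have hz' : z.re ^ 2 + z.im ^ 2 ≤ 1 := by
    rw [sq, sq, ← Complex.normSq_apply, ← Complex.sq_norm]
    nlinarith [norm_nonneg z]
  have hre : -1 ≤ z.re := by nlinarith [sq_nonneg z.im]
  have hsq : 2 * z.re ^ 2 ≤ 1 + z.re ^ 2 - z.im ^ 2 := by linarith
  have hq : (aeval z (mixPoly p)).re =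
      p * (1 + z.re) + (1 - p) * (1 + z.re ^ 2 - z.im ^ 2) := by
    simp only [aeval_mixPoly, Complex.real_smul, sq, Complex.ofReal_sub, Complex.ofReal_one,
      Complex.add_re, Complex.one_re, Complex.mul_re, Complex.ofReal_re, Complex.ofReal_im,
      zero_mul, sub_zero, Complex.sub_re, Complex.sub_im, Complex.one_im, sub_self, Complex.mul_im]
    ring
  rw [hq]
  rcases le_or_gt z.re (-1 / 2) with h | h
  · have := mul_pos (sub_pos.2 hp1) (by nlinarith : 0 < 1 + z.re ^ 2 - z.im ^ 2)
    nlinarith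
  · have := mul_pos hp0 (by linarith : 0 < 1 + z.re)
    nlinarith [mul_nonneg (sub_pos.2 hp1).le (sq_nonneg z.re)]

theorem Matrix.linfty_opNorm_le_one {m n α : Type*} [Fintype m] [Fintype n]
    [SeminormedAddCommGroup α] {A : Matrix m n α} (h : ∀ i, ∑ j, ‖A i j‖ ≤ 1) :
    ‖A‖ ≤ 1 := by
  have : (Finset.univ.sup fun i => ∑ j, ‖A i j‖₊) ≤ 1 :=
    Finset.sup_le fun i _ => by rw [← NNReal.coe_le_coe]; push_cast; exact h i
  rw [linfty_opNorm_def]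
  exact_mod_cast this

section

variable {n : Type*} [Fintype n] [DecidableEq n]

theorem Matrix.norm_le_one_of_mem_spectrum {A : Matrix n n ℂ}
    (h : ∀ i, ∑ j, ‖A i j‖ ≤ 1) {z : ℂ} (hz : z ∈ spectrum ℂ A) : ‖z‖ ≤ 1 := by
  have h1 : ‖(1 : Matrix n n ℂ)‖ ≤ 1 :=
    linfty_opNorm_le_one fun i => by simp [one_apply, apply_ite]
  have hA := linfty_opNorm_le_one h
  have := mem_closedBall_zero_iff.1 (spectrum.subset_closedBall_norm_mul A hz)
  nlinarith [norm_nonneg A, norm_nonneg (1 : Matrix n n ℂ)]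

theorem Matrix.isUnit_aeval_mixPoly {A : Matrix n n ℂ} (h : ∀ i, ∑ j, ‖A i j‖ ≤ 1)
    {p : ℝ} (hp0 : 0 < p) (hp1 : p < 1) : IsUnit (aeval A (mixPoly p)) := by
  rw [← aeval_map_algebraMap ℂ, ← not_not (a := IsUnit _), ← spectrum.zero_mem_iff ℂ,
    spectrum.map_polynomial_aeval_of_degree_pos]
  · rintro ⟨z, hz, hz0⟩
    simp only [eval_map_algebraMap] at hz0
    have := re_aeval_mixPoly_pos hp0 hp1 (norm_le_one_of_mem_spectrum h hz)
    rw [hz0, Complex.zero_re] at this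
    exact this.false
  · rw [degree_map, degree_mixPoly hp1]
    norm_num

theorem Matrix.isUnit_of_isUnit_map {K L : Type*} [Field K] [CommRing L] [Nontrivial L]
    (f : K →+* L) {M : Matrix n n K} (h : IsUnit (M.map f)) : IsUnit M := by
  rw [isUnit_iff_isUnit_det] at h ⊢
  rw [← RingHom.mapMatrix_apply, ← RingHom.map_det] at h
  exact (isUnit_map_iff f _).1 h

theorem Matrix.isUnit_one_add_smul_add_smul_sq_of_mem_rowStochastic {B : Matrix n n ℝ}
    (hB : B ∈ rowStochastic ℝ n) {p : ℝ} (hp0 : 0 < p) (hp1 : p < 1) :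
    IsUnit (1 + p • B + (1 - p) • B ^ 2) := by
  set f := (Algebra.ofId ℝ ℂ).mapMatrix (m := n)
  have hf : ∀ i, ∑ j, ‖f B i j‖ ≤ 1 := fun i => by
    simp [f, Complex.norm_real, abs_of_nonneg (nonneg_of_mem_rowStochastic hB),
      sum_row_of_mem_rowStochastic hB]
  rw [← aeval_mixPoly]
  refine isUnit_of_isUnit_map (algebraMap ℝ ℂ) ?_
  change IsUnit (f (aeval B (mixPoly p)))
  rw [← aeval_algHom_apply]
  exact isUnit_aeval_mixPoly hf hp0 hp1

theorem Matrix.vecMul_one_add_smul_add_smul_sq {R : Type*} [CommRing R] {B : Matrix n n R}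
    {v : n → R} (hv : v ᵥ* B = v) (p : R) :
    v ᵥ* (1 + p • B + (1 - p) • B ^ 2) = (2 : R) • v := by
  rw [vecMul_add, vecMul_add, vecMul_smul, vecMul_smul, vecMul_one, sq, ← vecMul_vecMul, hv, hv]
  module

end

/-- For a column stochastic matrix `B` and `p ∈ (0,1)`, the matrix `I + p·B + (1−p)·B²` is
invertible, and the unique row vector `z` with `z·(I + p·B + (1−p)·B²) = 𝟏` is `z = (1/2)𝟏`. -/
theorem stmt_7 (N : ℕ) (B : Matrix (Fin N) (Fin N) ℝ)
    (hnn : ∀ i j, 0 ≤ B i j) (hcol : ∀ j, ∑ i, B i j = 1)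
    (p : ℝ) (hp0 : 0 < p) (hp1 : p < 1) :
    IsUnit ((1 : Matrix (Fin N) (Fin N) ℝ) + p • B + (1 - p) • B ^ 2) ∧
    ∀ z : Fin N → ℝ,
      z ᵥ* ((1 : Matrix (Fin N) (Fin N) ℝ) + p • B + (1 - p) • B ^ 2) = (fun _ => 1) ↔
        z = fun _ => 1 / 2 := by
  have hB : B ∈ colStochastic ℝ (Fin N) := mem_colStochastic_iff_sum.2 ⟨hnn, hcol⟩
  have hunit : IsUnit (1 + p • B + (1 - p) • B ^ 2) := by
    rw [← isUnit_transpose]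
    simpa [transpose_pow] using isUnit_one_add_smul_add_smul_sq_of_mem_rowStochastic
      (transpose_mem_rowStochastic_iff_mem_colStochastic.2 hB) hp0 hp1
  have hhalf : (fun _ => 1 / 2) ᵥ* (1 + p • B + (1 - p) • B ^ 2) = fun _ => (1 : ℝ) := by
    rw [show (fun _ => 1 / 2 : Fin N → ℝ) = (1 / 2 : ℝ) • 1 by ext; simp, smul_vecMul,
      vecMul_one_add_smul_add_smul_sq (one_vecMul_of_mem_colStochastic hB), smul_smul]
    ext; norm_num
  refine ⟨hunit, fun z => ?_⟩
  rw [← hhalf]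
  exact (vecMul_injective_iff_isUnit.2 hunit).eq_iff
end

section
/- Let G be a connected finite simple undirected graph on vertex set {1,…,N} with N ≥ 2, adjacency matrix A and diagonal degree matrix D, and let p ∈ [0,1]. Then the matrix M := (p·I + (1−p)·A·D⁻¹)·(A + I)·(I + D)⁻¹ + I is invertible, and the unique row vector z ∈ ℝ^N satisfying z·M = 𝟏 is z = (1/2)·𝟏. -/
/-!
Write `M = S * C + 1` with `S = p • 1 + (1 - p) • A D⁻¹` (the lazy random walk on `G`) and
`C = (A + 1) (1 + D)⁻¹` (the random walk on `G` with a loop at every vertex). Both are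
column-stochastic, hence so is `S * C`, every column of `M` sums to `2`, and `(1/2) 𝟏` solves
`z M = 𝟏`. The diagonal of `S * C` is positive (through the diagonal of `S` when `p > 0`,
through a neighbour when `p < 1`), so `M` is strictly diagonally dominant by columns and
Gershgorin's theorem makes it invertible.
-/

open Matrix

namespace Matrix

variable {n : Type*} [Fintype n]

lemma mul_apply_pos_of_nonneg {R : Type*} [Semiring R] [PartialOrder R] [IsStrictOrderedRing R]
    {A B : Matrix n n R} (hA : ∀ i j, 0 ≤ A i j) (hB : ∀ i j, 0 ≤ B i j) {i j k : n}
    (hAik : 0 < A i k) (hBkj : 0 < B k j) : 0 < (A * B) i j :=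
  Finset.sum_pos' (fun l _ => mul_nonneg (hA i l) (hB l j)) ⟨k, Finset.mem_univ k, mul_pos hAik hBkj⟩

variable [DecidableEq n]

lemma inv_diagonal_of_ne_zero {K : Type*} [Field K] {d : n → K} (hd : ∀ i, d i ≠ 0) :
    (diagonal d)⁻¹ = diagonal d⁻¹ :=
  inv_eq_right_inv <| by simp [diagonal_mul_diagonal, hd]

lemma mul_inv_diagonal_apply {K : Type*} [Field K] {d : n → K} (hd : ∀ i, d i ≠ 0)
    (X : Matrix n n K) (i j : n) : (X * (diagonal d)⁻¹) i j = X i j / d j := by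
  rw [inv_diagonal_of_ne_zero hd, mul_diagonal, Pi.inv_apply, div_eq_mul_inv]

lemma mul_inv_diagonal_mem_colStochastic {X : Matrix n n ℝ} {d : n → ℝ}
    (hX : ∀ i j, 0 ≤ X i j) (hd : ∀ i, 0 < d i) (hcol : 1 ᵥ* X = d) :
    X * (diagonal d)⁻¹ ∈ colStochastic ℝ n := by
  have hd' : ∀ i, d i ≠ 0 := fun i => (hd i).ne'
  refine mem_colStochastic.2 ⟨fun i j => ?_, ?_⟩
  · rw [mul_inv_diagonal_apply hd']
    exact div_nonneg (hX i j) (hd j).le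
  · ext j
    rw [← vecMul_vecMul, hcol, inv_diagonal_of_ne_zero hd', vecMul_diagonal]
    simp [hd']

lemma isUnit_add_one_of_mem_colStochastic {S : Matrix n n ℝ} (hS : S ∈ colStochastic ℝ n)
    (hdiag : ∀ j, 0 < S j j) : IsUnit (S + 1) := by
  rw [isUnit_iff_isUnit_det, isUnit_iff_ne_zero]
  refine det_ne_zero_of_sum_col_lt_diag fun j => ?_
  have hoff : ∑ i ∈ Finset.univ.erase j, ‖(S + 1) i j‖ = 1 - S j j := by
    rw [← sum_col_of_mem_colStochastic hS j, ← Finset.add_sum_erase _ _ (Finset.mem_univ j),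
      add_sub_cancel_left]
    refine Finset.sum_congr rfl fun i hi => ?_
    rw [add_apply, one_apply_ne (Finset.ne_of_mem_erase hi), add_zero,
      Real.norm_of_nonneg (nonneg_of_mem_colStochastic hS)]
  rw [hoff, add_apply, one_apply_eq, Real.norm_of_nonneg (by linarith [hdiag j])]
  linarith [hdiag j]

lemma half_vecMul_add_one_of_mem_colStochastic {S : Matrix n n ℝ}
    (hS : S ∈ colStochastic ℝ n) : (fun _ => 1 / 2) ᵥ* (S + 1) = 1 := by
  have : (fun _ => (1 : ℝ) / 2) = (1 / 2 : ℝ) • (1 : n → ℝ) := by ext; simp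
  rw [this, smul_vecMul, vecMul_add, one_vecMul_of_mem_colStochastic hS, vecMul_one]
  ext; norm_num

end Matrix

namespace SimpleGraph

variable {V : Type*} [Fintype V] (G : SimpleGraph V) [DecidableRel G.Adj]

lemma one_vecMul_adjMatrix {α : Type*} [NonAssocSemiring α] :
    1 ᵥ* G.adjMatrix α = fun v => (G.degree v : α) := by
  ext v
  simp [adjMatrix_vecMul_apply, card_neighborFinset_eq_degree]

variable [DecidableEq V]

noncomputable def walkMatrix : Matrix V V ℝ := G.adjMatrix ℝ * (G.degMatrix ℝ)⁻¹

noncomputable def loopyWalkMatrix : Matrix V V ℝ := (G.adjMatrix ℝ + 1) * (1 + G.degMatrix ℝ)⁻¹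

lemma one_add_degMatrix : 1 + G.degMatrix ℝ = diagonal fun v => (G.degree v : ℝ) + 1 := by
  rw [degMatrix, ← diagonal_one, diagonal_add]
  simp only [add_comm]

lemma walkMatrix_mem_colStochastic (hdeg : ∀ v, 0 < G.degree v) :
    G.walkMatrix ∈ colStochastic ℝ V :=
  mul_inv_diagonal_mem_colStochastic (fun _ _ => by rw [adjMatrix_apply]; positivity)
    (fun v => by exact_mod_cast hdeg v) G.one_vecMul_adjMatrix

lemma loopyWalkMatrix_mem_colStochastic : G.loopyWalkMatrix ∈ colStochastic ℝ V := by
  rw [loopyWalkMatrix, one_add_degMatrix]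
  refine mul_inv_diagonal_mem_colStochastic (fun i j => ?_) (fun v => by positivity) ?_
  · rw [Matrix.add_apply, adjMatrix_apply, one_apply]; positivity
  · rw [vecMul_add, one_vecMul_adjMatrix, vecMul_one]; rfl

lemma walkMatrix_apply (hdeg : ∀ v, 0 < G.degree v) (v w : V) :
    G.walkMatrix v w = G.adjMatrix ℝ v w / G.degree w :=
  mul_inv_diagonal_apply (fun u => by exact_mod_cast (hdeg u).ne') _ v w

lemma loopyWalkMatrix_apply (v w : V) :
    G.loopyWalkMatrix v w = (G.adjMatrix ℝ v w + (1 : Matrix V V ℝ) v w) / (G.degree w + 1) := by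
  rw [loopyWalkMatrix, one_add_degMatrix, mul_inv_diagonal_apply (fun u => by positivity),
    Matrix.add_apply]

noncomputable def lazyWalkMatrix (p : ℝ) : Matrix V V ℝ := p • 1 + (1 - p) • G.walkMatrix

lemma lazyWalkMatrix_mem_colStochastic (hdeg : ∀ v, 0 < G.degree v) {p : ℝ} (hp0 : 0 ≤ p)
    (hp1 : p ≤ 1) : G.lazyWalkMatrix p ∈ colStochastic ℝ V :=
  convex_colStochastic (one_mem _) (G.walkMatrix_mem_colStochastic hdeg) hp0 (by linarith)
    (by ring)

lemma lazyWalkMatrix_mul_loopyWalkMatrix_apply_self_pos (hdeg : ∀ v, 0 < G.degree v) {p : ℝ}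
    (hp0 : 0 ≤ p) (hp1 : p ≤ 1) (v : V) : 0 < (G.lazyWalkMatrix p * G.loopyWalkMatrix) v v := by
  have hlazy := G.lazyWalkMatrix_mem_colStochastic hdeg hp0 hp1
  have hloopy := G.loopyWalkMatrix_mem_colStochastic
  rcases hp1.lt_or_eq with hp | rfl
  · obtain ⟨w, hvw⟩ := (G.degree_pos_iff_exists_adj v).1 (hdeg v)
    refine mul_apply_pos_of_nonneg (fun _ _ => nonneg_of_mem_colStochastic hlazy)
      (fun _ _ => nonneg_of_mem_colStochastic hloopy) (k := w) ?_ ?_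
    · rw [lazyWalkMatrix, Matrix.add_apply, Matrix.smul_apply, Matrix.smul_apply,
        one_apply_ne hvw.ne, G.walkMatrix_apply hdeg, adjMatrix_apply, if_pos hvw]
      have hw := hdeg w
      have hp' : 0 < 1 - p := by linarith
      simp only [smul_eq_mul, mul_zero, zero_add]
      positivity
    · rw [loopyWalkMatrix_apply, adjMatrix_apply, if_pos hvw.symm, one_apply_ne hvw.ne.symm]
      positivity
  · refine mul_apply_pos_of_nonneg (fun _ _ => nonneg_of_mem_colStochastic hlazy)
      (fun _ _ => nonneg_of_mem_colStochastic hloopy) (k := v) ?_ ?_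
    · simp [lazyWalkMatrix]
    · rw [loopyWalkMatrix_apply, one_apply_eq, adjMatrix_apply, if_neg (G.irrefl (v := v))]
      positivity

end SimpleGraph

/-- For a connected graph on `N ≥ 2` vertices and `p ∈ [0,1]`, the matrix
`M = (p·I + (1−p)·A·D⁻¹)·(A + I)·(I + D)⁻¹ + I` is invertible, and the unique row vector `z`
with `z·M = 𝟏` is `z = (1/2)𝟏`. -/
theorem stmt_9 (N : ℕ) (hN : 2 ≤ N) (G : SimpleGraph (Fin N)) [DecidableRel G.Adj]
    (hconn : G.Connected)
    (p : ℝ) (hp0 : 0 ≤ p) (hp1 : p ≤ 1) :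
    IsUnit ((p • (1 : Matrix (Fin N) (Fin N) ℝ)
        + (1 - p) • (G.adjMatrix ℝ * (Matrix.diagonal fun v => (G.degree v : ℝ))⁻¹))
        * (G.adjMatrix ℝ + 1) * (1 + Matrix.diagonal fun v => (G.degree v : ℝ))⁻¹ + 1) ∧
    ∀ z : Fin N → ℝ,
      z ᵥ* ((p • (1 : Matrix (Fin N) (Fin N) ℝ)
          + (1 - p) • (G.adjMatrix ℝ * (Matrix.diagonal fun v => (G.degree v : ℝ))⁻¹))
          * (G.adjMatrix ℝ + 1) * (1 + Matrix.diagonal fun v => (G.degree v : ℝ))⁻¹ + 1)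
        = (fun _ => 1) ↔ z = fun _ => 1 / 2 := by
  have : Nontrivial (Fin N) := Fin.nontrivial_iff_two_le.2 hN
  have hdeg : ∀ v, 0 < G.degree v := fun v => hconn.preconnected.degree_pos_of_nontrivial v
  have hSC := mul_mem (G.lazyWalkMatrix_mem_colStochastic hdeg hp0 hp1)
    G.loopyWalkMatrix_mem_colStochastic
  have hunit := isUnit_add_one_of_mem_colStochastic hSC
    (G.lazyWalkMatrix_mul_loopyWalkMatrix_apply_self_pos hdeg hp0 hp1)
  have hM : (p • (1 : Matrix (Fin N) (Fin N) ℝ)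
        + (1 - p) • (G.adjMatrix ℝ * (Matrix.diagonal fun v => (G.degree v : ℝ))⁻¹))
        * (G.adjMatrix ℝ + 1) * (1 + Matrix.diagonal fun v => (G.degree v : ℝ))⁻¹ + 1
      = G.lazyWalkMatrix p * G.loopyWalkMatrix + 1 := by
    rw [Matrix.mul_assoc]; rfl
  rw [hM]
  exact ⟨hunit, fun z => (vecMul_injective_iff_isUnit.2 hunit).eq_iff'
    (half_vecMul_add_one_of_mem_colStochastic hSC)⟩
end

section
/- Let G be a connected d-regular finite simple undirected graph on vertex set {1,…,N} (d ≥ 1) with adjacency matrix A, and let p ∈ (0,1]. Then the rank of the matrix d·I − p·A − ((1−p)/d)·A² equals N − 1. -/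
/-!
Writing `A` for the adjacency matrix and `c = (1 - p) / d`, the matrix factors as
`(d • 1 - A) * (1 + c • A)`. The first factor is the Laplacian of the `d`-regular graph, whose
kernel has one dimension per connected component. The second factor is strictly diagonally
dominant, since each row has off-diagonal sum `c * d = 1 - p < 1`, so by Gershgorin it is
invertible and does not change the rank.
-/

open Matrix

namespace SimpleGraph

variable {V : Type*} [Fintype V] [DecidableEq V] {G : SimpleGraph V} [DecidableRel G.Adj]

variable (G) in
theorem rank_lapMatrix_add_card_connectedComponent :
    (G.lapMatrix ℝ).rank + Fintype.card G.ConnectedComponent = Fintype.card V := by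
  rw [card_connectedComponent_eq_finrank_ker_toLin'_lapMatrix, Matrix.rank, Matrix.toLin'_apply',
    LinearMap.finrank_range_add_finrank_ker, Module.finrank_fintype_fun_eq_card]

theorem Connected.rank_lapMatrix (hG : G.Connected) :
    (G.lapMatrix ℝ).rank = Fintype.card V - 1 := by
  have hsum := G.rank_lapMatrix_add_card_connectedComponent
  have hcard : Fintype.card G.ConnectedComponent = 1 := by
    have : Nonempty G.ConnectedComponent := hG.nonempty.map G.connectedComponentMk
    exact le_antisymm (Fintype.card_le_one_iff_subsingleton.2
      hG.preconnected.subsingleton_connectedComponent) Fintype.card_pos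
  omega

theorem IsRegularOfDegree.lapMatrix_eq {R : Type*} [Ring R] {d : ℕ} (hG : G.IsRegularOfDegree d) :
    G.lapMatrix R = (d : R) • 1 - G.adjMatrix R := by
  ext i j
  simp [lapMatrix, degMatrix, hG i, Matrix.diagonal_apply, Matrix.one_apply]

theorem IsRegularOfDegree.det_one_add_smul_adjMatrix_ne_zero {d : ℕ}
    (hG : G.IsRegularOfDegree d) {c : ℝ} (hc : |c| * d < 1) :
    (1 + c • G.adjMatrix ℝ).det ≠ 0 := by
  refine det_ne_zero_of_sum_row_lt_diag fun k => ?_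
  have hoff : ∀ j ∈ Finset.univ.erase k,
      ‖(1 + c • G.adjMatrix ℝ) k j‖ = ‖c * G.adjMatrix ℝ k j‖ :=
    fun j hj => by simp [Matrix.one_apply_ne' (Finset.ne_of_mem_erase hj)]
  calc ∑ j ∈ Finset.univ.erase k, ‖(1 + c • G.adjMatrix ℝ) k j‖
      = ∑ j, ‖c * G.adjMatrix ℝ k j‖ := by
        rw [Finset.sum_congr rfl hoff, Finset.sum_erase _ (by simp)]
    _ = |c| * d := by
        simp only [norm_mul, ← Finset.mul_sum, Real.norm_eq_abs]
        simp [adjMatrix_apply, apply_ite, ← neighborFinset_eq_filter, hG k]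
    _ < ‖(1 + c • G.adjMatrix ℝ) k k‖ := by simpa using hc

end SimpleGraph

theorem smul_one_sub_smul_sub_smul_sq_eq_mul {K R : Type*} [CommRing K] [Ring R] [Algebra K R]
    {d p c : K} (hdc : d * c = 1 - p) (a : R) :
    d • 1 - p • a - c • a ^ 2 = (d • 1 - a) * (1 + c • a) := by
  obtain rfl : p = 1 - d * c := by linear_combination hdc
  simp only [sub_mul, mul_add, mul_one, one_mul, smul_mul_assoc, mul_smul_comm, sq]
  module

/-- For a connected `d`-regular graph (`d ≥ 1`) and `p ∈ (0,1]`, the rank of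
`d·I − p·A − ((1−p)/d)·A²` equals `N − 1`. -/
theorem stmt_10 (N d : ℕ) (hd : 1 ≤ d) (G : SimpleGraph (Fin N)) [DecidableRel G.Adj]
    (hconn : G.Connected) (hreg : G.IsRegularOfDegree d)
    (p : ℝ) (hp0 : 0 < p) (hp1 : p ≤ 1) :
    ((d : ℝ) • (1 : Matrix (Fin N) (Fin N) ℝ) - p • G.adjMatrix ℝ
      - ((1 - p) / (d : ℝ)) • (G.adjMatrix ℝ) ^ 2).rank = N - 1 := by
  have hd0 : (d : ℝ) ≠ 0 := Nat.cast_ne_zero.2 (by omega)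
  have hdc : (d : ℝ) * ((1 - p) / d) = 1 - p := mul_div_cancel₀ _ hd0
  have hinv : (1 + ((1 - p) / d) • G.adjMatrix ℝ).det ≠ 0 := by
    refine hreg.det_one_add_smul_adjMatrix_ne_zero ?_
    rw [abs_of_nonneg (div_nonneg (sub_nonneg.2 hp1) d.cast_nonneg), mul_comm, hdc]
    linarith
  rw [smul_one_sub_smul_sub_smul_sq_eq_mul hdc, rank_mul_eq_left_of_det_ne_zero _ _ hinv,
    ← hreg.lapMatrix_eq, hconn.rank_lapMatrix, Fintype.card_fin]
end

section
/- Let G be a connected bipartite d-regular finite simple undirected graph on vertex set {1,…,N} (d ≥ 1) with parts V and W and adjacency matrix A. Then a row vector z ∈ ℝ^N satisfies z·(d·I + A) = d·𝟏 if and only if there exists ζ ∈ ℝ such that z_i = ζ for all i ∈ V and z_i = 1 − ζ for all i ∈ W. -/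
open Matrix

/-- For a connected bipartite `d`-regular graph with parts `V` and `Vᶜ`, a row vector `z`
satisfies `z·(d·I + A) = d·𝟏` iff `z ≡ ζ` on `V` and `z ≡ 1 − ζ` on `Vᶜ` for some `ζ ∈ ℝ`. -/
theorem stmt_14 (N d : ℕ) (hd : 1 ≤ d) (G : SimpleGraph (Fin N)) [DecidableRel G.Adj]
    (hconn : G.Connected) (hreg : G.IsRegularOfDegree d) (V : Set (Fin N))
    (hbip : ∀ i j, G.Adj i j → (i ∈ V ↔ j ∉ V))
    (z : Fin N → ℝ) :
    z ᵥ* ((d : ℝ) • (1 : Matrix (Fin N) (Fin N) ℝ) + G.adjMatrix ℝ) = (fun _ => (d : ℝ)) ↔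
      ∃ ζ : ℝ, (∀ i ∈ V, z i = ζ) ∧ (∀ i ∉ V, z i = 1 - ζ) := by
  classical
  have hcard : ∀ j : Fin N, (G.neighborFinset j).card = d := fun j => hreg j
  have entry : ∀ (j : Fin N),
      (z ᵥ* ((d : ℝ) • (1 : Matrix (Fin N) (Fin N) ℝ) + G.adjMatrix ℝ)) j
        = d * z j + ∑ i ∈ G.neighborFinset j, z i := by
    intro j
    rw [Matrix.vecMul_add, Pi.add_apply, SimpleGraph.adjMatrix_vecMul_apply]
    congr 1
    simp [Matrix.vecMul, dotProduct, Matrix.smul_apply, Matrix.one_apply,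
      Finset.sum_ite_eq', mul_comm]
  constructor
  · intro hz
    have heq : ∀ j, (d : ℝ) * z j + ∑ i ∈ G.neighborFinset j, z i = d := by
      intro j
      have := congrFun hz j
      rw [entry j] at this
      exact this
    set w : Fin N → ℝ := fun i => if i ∈ V then z i else 1 - z i with hw
    have hharm : ∀ j, ∑ i ∈ G.neighborFinset j, w i = d * w j := by
      intro j
      by_cases hj : j ∈ V
      · have hnb : ∀ i ∈ G.neighborFinset j, i ∉ V := by
          intro i hi
          rw [SimpleGraph.mem_neighborFinset] at hi
          exact fun hiV => ((hbip i j hi.symm).1 hiV) hj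
        have h1 : ∑ i ∈ G.neighborFinset j, z i
            = ∑ i ∈ G.neighborFinset j, (1 - w i) := by
          apply Finset.sum_congr rfl
          intro i hi
          simp [hw, hnb i hi]
        have h2 := heq j
        rw [h1, Finset.sum_sub_distrib, Finset.sum_const, hcard j, nsmul_eq_mul,
          mul_one] at h2
        have hwj : w j = z j := by simp [hw, hj]
        rw [hwj]; linarith
      · have hnb : ∀ i ∈ G.neighborFinset j, i ∈ V := by
          intro i hi
          rw [SimpleGraph.mem_neighborFinset] at hi
          by_contra hiV
          exact hj ((hbip j i hi).2 hiV)
        have h1 : ∑ i ∈ G.neighborFinset j, z i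
            = ∑ i ∈ G.neighborFinset j, w i := by
          apply Finset.sum_congr rfl
          intro i hi
          simp [hw, hnb i hi]
        have h2 := heq j
        rw [h1] at h2
        have hwj : w j = 1 - z j := by simp [hw, hj]
        rw [hwj]; linarith
    have hN : Nonempty (Fin N) := hconn.nonempty
    obtain ⟨j0, -, hj0⟩ := Finset.exists_max_image Finset.univ w
      ⟨Classical.arbitrary _, Finset.mem_univ _⟩
    have step : ∀ j, w j = w j0 → ∀ i ∈ G.neighborFinset j, w i = w j0 := by
      intro j hj i hi
      have hsum : ∑ i ∈ G.neighborFinset j, (w j0 - w i) = 0 := by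
        rw [Finset.sum_sub_distrib, Finset.sum_const, hcard j, nsmul_eq_mul,
          hharm j, hj]
        ring
      have hz0 := (Finset.sum_eq_zero_iff_of_nonneg
        (fun i _ => by have := hj0 i (Finset.mem_univ i); linarith)).1 hsum i hi
      linarith
    have hall : ∀ i, w i = w j0 := by
      have walkstep : ∀ {a b : Fin N} (p : G.Walk a b), w a = w j0 → w b = w j0 := by
        intro a b p
        induction p with
        | nil => exact fun h => h
        | @cons a c b h p ih =>
          intro ha
          exact ih (step a ha c (by rwa [SimpleGraph.mem_neighborFinset]))
      intro i
      obtain ⟨p⟩ := hconn j0 i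
      exact walkstep p rfl
    refine ⟨w j0, fun i hi => ?_, fun i hi => ?_⟩
    · have := hall i; simpa [hw, hi] using this
    · have := hall i; simp [hw, hi] at this; linarith
  · rintro ⟨ζ, hV, hW⟩
    funext j
    rw [entry j]
    by_cases hj : j ∈ V
    · have hnb : ∀ i ∈ G.neighborFinset j, z i = 1 - ζ := by
        intro i hi
        rw [SimpleGraph.mem_neighborFinset] at hi
        exact hW i (fun hiV => ((hbip i j hi.symm).1 hiV) hj)
      rw [Finset.sum_congr rfl hnb, Finset.sum_const, hcard j, nsmul_eq_mul,
        hV j hj]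
      ring
    · have hnb : ∀ i ∈ G.neighborFinset j, z i = ζ := by
        intro i hi
        rw [SimpleGraph.mem_neighborFinset] at hi
        exact hV i (by by_contra hiV; exact hj ((hbip j i hi).2 hiV))
      rw [Finset.sum_congr rfl hnb, Finset.sum_const, hcard j, nsmul_eq_mul,
        hW j hj]
      ring
end

section
/- Let A be the adjacency matrix of a strongly connected directed graph on N ≥ 2 vertices with no self-loops (so A ∈ ℝ^{N×N} has entries in {0,1}, zero diagonal, and for all i, j there exists k ≥ 1 with (A^k)_{i,j} > 0), and let D_in be the diagonal matrix of in-degrees (D_in)_{j,j} = Σ_i A_{i,j}, which are all positive. Then for every p ∈ [0,1], the matrix (p·I + (1−p)·A·D_in⁻¹)·(A + I)·(I + D_in)⁻¹ + I is invertible. -/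
open Matrix Finset

/-- For the adjacency matrix `A` of a strongly connected directed graph on `N ≥ 2` vertices
with no self-loops and all in-degrees positive, and for every `p ∈ [0,1]`, the matrix
`(p·I + (1−p)·A·D_in⁻¹)·(A + I)·(I + D_in)⁻¹ + I` is invertible. -/
theorem stmt_18 (N : ℕ) (hN : 2 ≤ N) (A : Matrix (Fin N) (Fin N) ℝ)
    (h01 : ∀ i j, A i j = 0 ∨ A i j = 1)
    (hloop : ∀ i, A i i = 0)
    (hsc : ∀ i j, ∃ k : ℕ, 1 ≤ k ∧ 0 < (A ^ k) i j)
    (hin : ∀ j, 0 < ∑ i, A i j)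
    (p : ℝ) (hp0 : 0 ≤ p) (hp1 : p ≤ 1) :
    IsUnit ((p • (1 : Matrix (Fin N) (Fin N) ℝ)
        + (1 - p) • (A * (Matrix.diagonal fun j => ∑ i, A i j)⁻¹))
        * (A + 1) * (1 + Matrix.diagonal fun j => ∑ i, A i j)⁻¹ + 1) := by
  classical
  set d : Fin N → ℝ := fun j => ∑ i, A i j with hd_def
  have hdpos : ∀ j, 0 < d j := hin
  have hA0 : ∀ i j, 0 ≤ A i j := fun i j => by rcases h01 i j with h | h <;> simp [h]
  set M : Matrix (Fin N) (Fin N) ℝ :=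
    (p • (1 : Matrix (Fin N) (Fin N) ℝ)
        + (1 - p) • (A * (Matrix.diagonal d)⁻¹))
        * (A + 1) * (1 + Matrix.diagonal d)⁻¹ with hM_def
  -- inverses of the diagonal matrices
  have hdiaginv : (Matrix.diagonal d)⁻¹ = Matrix.diagonal fun j => (d j)⁻¹ := by
    apply Matrix.inv_eq_right_inv
    rw [Matrix.diagonal_mul_diagonal]
    rw [show (fun j => d j * (d j)⁻¹) = fun _ => (1:ℝ) from
      funext fun j => mul_inv_cancel₀ (hdpos j).ne']
    exact Matrix.diagonal_one
  have h1d : (1 + Matrix.diagonal d)⁻¹ = Matrix.diagonal fun j => (1 + d j)⁻¹ := by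
    rw [← Matrix.diagonal_one, Matrix.diagonal_add]
    apply Matrix.inv_eq_right_inv
    rw [Matrix.diagonal_mul_diagonal]
    have hfun : (fun j => (1 + d j) * (1 + d j)⁻¹) = fun _ => (1:ℝ) :=
      funext fun j => mul_inv_cancel₀ (by have := hdpos j; positivity)
    rw [hfun]
    exact Matrix.diagonal_one
  -- entrywise formula
  have hM : ∀ i j, M i j =
      (∑ k, (p * (if i = k then (1:ℝ) else 0) + (1 - p) * (A i k * (d k)⁻¹))
        * (A k j + if k = j then (1:ℝ) else 0)) * (1 + d j)⁻¹ := by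
    intro i j
    rw [hM_def, hdiaginv, h1d, Matrix.mul_diagonal, Matrix.mul_apply]
    congr 1
    refine Finset.sum_congr rfl fun k _ => ?_
    simp [Matrix.add_apply, Matrix.one_apply, Matrix.mul_diagonal, smul_eq_mul]
  have h1dpos : ∀ j, (0:ℝ) < (1 + d j)⁻¹ := fun j => by
    have := hdpos j; positivity
  -- nonnegativity of the summands
  have ht0 : ∀ i j k, 0 ≤ (p * (if i = k then (1:ℝ) else 0) + (1 - p) * (A i k * (d k)⁻¹))
      * (A k j + if k = j then (1:ℝ) else 0) := by
    intro i j k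
    apply mul_nonneg
    · apply add_nonneg
      · apply mul_nonneg hp0; split <;> norm_num
      · exact mul_nonneg (by linarith) (mul_nonneg (hA0 _ _) (inv_nonneg.mpr (hdpos k).le))
    · have := hA0 k j; split <;> [linarith; linarith]
  have hM0 : ∀ i j, 0 ≤ M i j := by
    intro i j
    rw [hM i j]
    exact mul_nonneg (Finset.sum_nonneg fun k _ => ht0 i j k) (h1dpos j).le
  -- single-term lower bound
  have hLB : ∀ i j k, (p * (if i = k then (1:ℝ) else 0) + (1 - p) * (A i k * (d k)⁻¹))
      * (A k j + if k = j then (1:ℝ) else 0) * (1 + d j)⁻¹ ≤ M i j := by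
    intro i j k
    rw [hM i j]
    exact mul_le_mul_of_nonneg_right
      (Finset.single_le_sum (fun k _ => ht0 i j k) (Finset.mem_univ k)) (h1dpos j).le
  -- column sums are 1
  have hcol : ∀ j, ∑ i, M i j = 1 := by
    intro j
    simp only [hM]
    rw [← Finset.sum_mul, Finset.sum_comm]
    have hinner : ∀ k, ∑ i, (p * (if i = k then (1:ℝ) else 0) + (1 - p) * (A i k * (d k)⁻¹))
        * (A k j + if k = j then (1:ℝ) else 0)
        = (A k j + if k = j then (1:ℝ) else 0) := by
      intro k
      rw [← Finset.sum_mul]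
      have : ∑ i, (p * (if i = k then (1:ℝ) else 0) + (1 - p) * (A i k * (d k)⁻¹)) = 1 := by
        rw [Finset.sum_add_distrib, ← Finset.mul_sum, ← Finset.mul_sum, ← Finset.sum_mul]
        have h1 : ∑ i, (if i = k then (1:ℝ) else 0) = 1 := by simp
        have h2 : (∑ i, A i k) = d k := rfl
        rw [h1, h2, mul_inv_cancel₀ (hdpos k).ne']
        ring
      rw [this, one_mul]
    rw [Finset.sum_congr rfl fun k _ => hinner k]
    rw [Finset.sum_add_distrib]
    have h3 : (∑ k, A k j) = d j := rfl
    have h4 : ∑ k, (if k = j then (1:ℝ) else 0) = 1 := by simp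
    rw [h3, h4]
    have : (0:ℝ) < 1 + d j := by have := hdpos j; linarith
    field_simp
    ring
  -- main argument
  rw [Matrix.isUnit_iff_isUnit_det, isUnit_iff_ne_zero]
  intro hdet
  obtain ⟨v, hv0, hveq⟩ := Matrix.exists_vecMul_eq_zero_iff.mpr hdet
  have heq : ∀ j, ∑ k, v k * M k j = - v j := by
    intro j
    have h := congrFun hveq j
    rw [Matrix.vecMul_add, Matrix.vecMul_one] at h
    have h' : (v ᵥ* M) j + v j = 0 := h
    have : (v ᵥ* M) j = ∑ k, v k * M k j := by
      simp [Matrix.vecMul, dotProduct]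
    linarith [this ▸ h']
  -- key lemma, applied to v or -v
  have key : ∀ w : Fin N → ℝ, (∀ j, ∑ k, w k * M k j = - w j) →
      ∀ i₀ : Fin N, 0 < w i₀ → (∀ k, |w k| ≤ w i₀) → False := by
    intro w heqw i₀ hm hmax
    set m := w i₀ with hm_def
    have habs : ∀ k, -m ≤ w k ∧ w k ≤ m := fun k => abs_le.mp (hmax k)
    have C1 : ∀ j, w j = m → ∀ k, 0 < M k j → w k = -m := by
      intro j hj k hk
      have h0 : ∑ k, (w k + m) * M k j = 0 := by
        simp only [add_mul]
        rw [Finset.sum_add_distrib, ← Finset.mul_sum, hcol j, heqw j, hj]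
        ring
      have := (Finset.sum_eq_zero_iff_of_nonneg fun k _ =>
        mul_nonneg (by linarith [(habs k).1]) (hM0 k j)).mp h0 k (Finset.mem_univ k)
      rcases mul_eq_zero.mp this with h | h
      · linarith
      · exact absurd h hk.ne'
    have C1' : ∀ j, w j = -m → ∀ k, 0 < M k j → w k = m := by
      intro j hj k hk
      have h0 : ∑ k, (m - w k) * M k j = 0 := by
        simp only [sub_mul]
        rw [Finset.sum_sub_distrib, ← Finset.mul_sum, hcol j, heqw j, hj]
        ring
      have := (Finset.sum_eq_zero_iff_of_nonneg fun k _ =>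
        mul_nonneg (by linarith [(habs k).2]) (hM0 k j)).mp h0 k (Finset.mem_univ k)
      rcases mul_eq_zero.mp this with h | h
      · linarith
      · exact absurd h hk.ne'
    rcases hp0.eq_or_lt with hp | hp
    · -- p = 0
      have hp' : p = 0 := hp.symm
      have hedge : ∀ i j : Fin N, A j i = 1 → 0 < M j i := by
        intro i j hji
        refine lt_of_lt_of_le ?_ (hLB j i i)
        rw [hp', hloop i, hji]
        have hji' : j ≠ i := fun h => by rw [h, hloop i] at hji; norm_num at hji
        rw [if_neg hji', if_pos rfl]
        have := hdpos i
        have := h1dpos i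
        positivity
      have htwo : ∀ i j k : Fin N, A j k = 1 → A k i = 1 → 0 < M j i := by
        intro i j k hjk hki
        refine lt_of_lt_of_le ?_ (hLB j i k)
        rw [hp', hjk, hki]
        have hki' : k ≠ i := fun h => by rw [h, hloop i] at hki; norm_num at hki
        rw [if_neg hki']
        have := hdpos k
        have := h1dpos i
        have h1 : (0:ℝ) < (0 * (if j = k then (1:ℝ) else 0) + (1 - 0) * (1 * (d k)⁻¹)) := by
          split <;> simp <;> positivity
        have h2 : (0:ℝ) < (1 + 0 : ℝ) := by norm_num
        positivity
      -- pick an in-neighbor j1 of i₀ and an in-neighbor j2 of j1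
      have hpick : ∀ i : Fin N, ∃ j, A j i = 1 := by
        intro i
        by_contra h
        push_neg at h
        have hz : ∀ j, A j i = 0 := fun j => (h01 j i).resolve_right (h j)
        have := hdpos i
        rw [hd_def] at this
        simp only [hz, Finset.sum_const_zero] at this
        exact lt_irrefl 0 this
      obtain ⟨j1, hj1⟩ := hpick i₀
      obtain ⟨j2, hj2⟩ := hpick j1
      have hw1 : w j1 = -m := C1 i₀ rfl j1 (hedge i₀ j1 hj1)
      have hw2 : w j2 = m := C1' j1 hw1 j2 (hedge j1 j2 hj2)
      have hw2' : w j2 = -m := C1 i₀ rfl j2 (htwo i₀ j2 j1 hj2 hj1)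
      rw [hw2] at hw2'
      linarith
    · -- p > 0
      have hMii : 0 < M i₀ i₀ := by
        refine lt_of_lt_of_le ?_ (hLB i₀ i₀ i₀)
        rw [hloop i₀, if_pos rfl]
        have := h1dpos i₀
        have := hdpos i₀
        have h1 : (0:ℝ) < p * 1 + (1 - p) * (0 * (d i₀)⁻¹) := by
          simp; positivity
        positivity
      have := C1 i₀ rfl i₀ hMii
      linarith
  -- choose the index of maximal absolute value
  obtain ⟨i₀, -, hmax⟩ := Finset.exists_max_image Finset.univ (fun i => |v i|)
    ⟨⟨0, by omega⟩, Finset.mem_univ _⟩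
  have hmax' : ∀ k, |v k| ≤ |v i₀| := fun k => hmax k (Finset.mem_univ k)
  have hm0 : 0 < |v i₀| := by
    obtain ⟨j, hj⟩ := Function.ne_iff.mp hv0
    exact lt_of_lt_of_le (abs_pos.mpr hj) (hmax' j)
  rcases abs_cases (v i₀) with ⟨h1, h2⟩ | ⟨h1, h2⟩
  · exact key v heq i₀ (h1 ▸ hm0) (fun k => h1 ▸ hmax' k)
  · refine key (-v) ?_ i₀ ?_ ?_
    · intro j
      simp only [Pi.neg_apply, neg_mul, Finset.sum_neg_distrib, heq j, neg_neg]
    · rw [h1] at hm0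
      simpa using hm0
    · intro k
      simp only [Pi.neg_apply, abs_neg]
      rw [← h1]
      exact hmax' k
end
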